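/- arXiv:2407.04667 — 4 statements merged into one kernel-verified Lean document; each statement's English description precedes it below -/
import Mathlib

section
/- For two finite random variables X and Y and two joint pmfs p, p' on X × Y, the total variation distance between the joint distributions is bounded by the minimum of 1 and the sum of the total variation distance between the X-marginals and the maximum over x of the total variation distance between the conditional distributions of Y given X = x. -/
open Finset

/-- Total variation distance between two functions viewed as pmfs on a finite set. -/
noncomputable def tv {X : Type*} [Fintype X] (p q : X → ℝ) : ℝ :=
  (1/2) * ∑ x, |p x - q x|

/-- `p` is a probability mass function on a finite set. -/
def IsPmf {X : Type*} [Fintype X] (p : X → ℝ) : Prop :=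
  (∀ x, 0 ≤ p x) ∧ ∑ x, p x = 1

/-- The (upper) diameter of a stochastic matrix: the largest total variation
distance between any two of its rows. -/
noncomputable def diam {I X : Type*} [Fintype I] [Fintype X] (P : I → X → ℝ) : ℝ :=
  ⨆ i : I, ⨆ j : I, tv (P i) (P j)

theorem stmt3 {X Y : Type*} [Fintype X] [Fintype Y] (p p' : X × Y → ℝ)
    (hp : IsPmf p) (hp' : IsPmf p')
    (hpos : ∀ x, 0 < ∑ y, p (x, y)) (hpos' : ∀ x, 0 < ∑ y, p' (x, y)) :
    tv p p' ≤
      min ((tv (fun x => ∑ y, p (x, y)) (fun x => ∑ y, p' (x, y))) +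
        ⨆ x : X, tv (fun y => p (x, y) / ∑ y', p (x, y'))
          (fun y => p' (x, y) / ∑ y', p' (x, y'))) 1 := by
  classical
  obtain ⟨hp0, hp1⟩ := hp
  obtain ⟨hp'0, hp'1⟩ := hp'
  set m : X → ℝ := fun x => ∑ y, p (x, y) with hm
  set m' : X → ℝ := fun x => ∑ y, p' (x, y) with hm'
  set q : X → Y → ℝ := fun x y => p (x, y) / m x with hq
  set q' : X → Y → ℝ := fun x y => p' (x, y) / m' x with hq'
  set S : ℝ := ⨆ x : X, tv (q x) (q' x) with hS
  have hqsum : ∀ x, ∑ y, q x y = 1 := by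
    intro x
    simp only [hq, ← Finset.sum_div]
    exact div_self (hpos x).ne'
  have hq'sum : ∀ x, ∑ y, q' x y = 1 := by
    intro x
    simp only [hq', ← Finset.sum_div]
    exact div_self (hpos' x).ne'
  have hqnn : ∀ x y, 0 ≤ q x y := fun x y => div_nonneg (hp0 _) (hpos x).le
  have hm'sum : ∑ x, m' x = 1 := by
    rw [hm']; rw [← hp'1, Fintype.sum_prod_type]
  have hm'nn : ∀ x, 0 ≤ m' x := fun x => (hpos' x).le
  have hpfac : ∀ x y, p (x, y) = m x * q x y := by
    intro x y
    rw [mul_comm]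
    exact (div_mul_cancel₀ _ (hpos x).ne').symm
  have hp'fac : ∀ x y, p' (x, y) = m' x * q' x y := by
    intro x y
    rw [mul_comm]
    exact (div_mul_cancel₀ _ (hpos' x).ne').symm
  have hSle : ∀ x, tv (q x) (q' x) ≤ S := fun x =>
    le_ciSup (f := fun x => tv (q x) (q' x)) (Set.Finite.bddAbove (Set.finite_range _)) x
  refine le_min ?_ ?_
  · -- main bound
    have key : ∀ x, ∑ y, |p (x, y) - p' (x, y)| ≤ |m x - m' x| + m' x * (2 * tv (q x) (q' x)) := by
      intro x
      have step : ∀ y, |p (x, y) - p' (x, y)| ≤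
          |m x - m' x| * q x y + m' x * |q x y - q' x y| := by
        intro y
        rw [hpfac x y, hp'fac x y]
        calc |m x * q x y - m' x * q' x y|
            = |(m x - m' x) * q x y + m' x * (q x y - q' x y)| := by ring_nf
          _ ≤ |(m x - m' x) * q x y| + |m' x * (q x y - q' x y)| := abs_add_le _ _
          _ = |m x - m' x| * q x y + m' x * |q x y - q' x y| := by
              rw [abs_mul, abs_mul, abs_of_nonneg (hqnn x y), abs_of_nonneg (hm'nn x)]
      calc ∑ y, |p (x, y) - p' (x, y)|
          ≤ ∑ y, (|m x - m' x| * q x y + m' x * |q x y - q' x y|) :=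
            Finset.sum_le_sum fun y _ => step y
        _ = |m x - m' x| * (∑ y, q x y) + m' x * ∑ y, |q x y - q' x y| := by
            rw [Finset.sum_add_distrib, ← Finset.mul_sum, ← Finset.mul_sum]
        _ = |m x - m' x| + m' x * (2 * tv (q x) (q' x)) := by
            rw [hqsum x, mul_one, tv]; ring
    have sum_key : ∑ z : X × Y, |p z - p' z| ≤
        (∑ x, |m x - m' x|) + 2 * S := by
      calc ∑ z : X × Y, |p z - p' z| = ∑ x, ∑ y, |p (x, y) - p' (x, y)| :=
            Fintype.sum_prod_type _
        _ ≤ ∑ x, (|m x - m' x| + m' x * (2 * tv (q x) (q' x))) :=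
            Finset.sum_le_sum fun x _ => key x
        _ = (∑ x, |m x - m' x|) + ∑ x, m' x * (2 * tv (q x) (q' x)) :=
            Finset.sum_add_distrib
        _ ≤ (∑ x, |m x - m' x|) + ∑ x, m' x * (2 * S) := by
            gcongr with x
            · exact hm'nn x
            · exact hSle x
        _ = (∑ x, |m x - m' x|) + 2 * S := by
            rw [← Finset.sum_mul, hm'sum, one_mul]
    have : tv p p' ≤ (1/2) * ((∑ x, |m x - m' x|) + 2 * S) := by
      rw [tv]
      have : (0:ℝ) < 1/2 := by norm_num
      nlinarith [sum_key]
    calc tv p p' ≤ (1/2) * ((∑ x, |m x - m' x|) + 2 * S) := this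
      _ = (1/2) * (∑ x, |m x - m' x|) + S := by ring
      _ = tv m m' + S := by rw [tv]
  · -- tv ≤ 1
    rw [tv]
    have : ∑ z : X × Y, |p z - p' z| ≤ ∑ z : X × Y, (p z + p' z) :=
      Finset.sum_le_sum fun z _ => by
        calc |p z - p' z| ≤ |p z| + |p' z| := abs_sub _ _
          _ = p z + p' z := by rw [abs_of_nonneg (hp0 z), abs_of_nonneg (hp'0 z)]
    rw [Finset.sum_add_distrib, hp1, hp'1] at this
    linarith
end

section
/- For finite random variables X, Y, Z with joint pmf p having positive marginals, the diameter of the CPT of Y given X is at most the diameter of the CPT of Y given (X,Z): d⁺(P_{Y|X}) ≤ d⁺(P_{Y|XZ}). -/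
open Finset

lemma tv_nonneg {X : Type*} [Fintype X] (p q : X → ℝ) : 0 ≤ tv p q := by
  unfold tv
  positivity

lemma tv_mix {Y Z : Type*} [Fintype Y] [Fintype Z]
    (a b : Z → ℝ) (ha : ∀ z, 0 ≤ a z) (hb : ∀ z, 0 ≤ b z)
    (ha1 : ∑ z, a z = 1) (hb1 : ∑ z, b z = 1)
    (Q1 Q2 : Z → Y → ℝ) (D : ℝ) (hD0 : 0 ≤ D)
    (hD : ∀ z1 z2, tv (Q1 z1) (Q2 z2) ≤ D) :
    tv (fun y => ∑ z, a z * Q1 z y) (fun y => ∑ z, b z * Q2 z y) ≤ D := by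
  have key : ∀ y : Y, (∑ z, a z * Q1 z y) - (∑ z, b z * Q2 z y)
      = ∑ z1, ∑ z2, a z1 * b z2 * (Q1 z1 y - Q2 z2 y) := by
    intro y
    have h1 : ∑ z1, ∑ z2, a z1 * b z2 * Q1 z1 y
        = (∑ z, a z * Q1 z y) * (∑ z, b z) := by
      rw [Finset.sum_mul]
      refine Finset.sum_congr rfl fun z1 _ => ?_
      rw [Finset.mul_sum]
      refine Finset.sum_congr rfl fun z2 _ => ?_
      ring
    have h2 : ∑ z1, ∑ z2, a z1 * b z2 * Q2 z2 y
        = (∑ z, a z) * (∑ z, b z * Q2 z y) := by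
      rw [Finset.sum_mul]
      refine Finset.sum_congr rfl fun z1 _ => ?_
      rw [Finset.mul_sum]
      refine Finset.sum_congr rfl fun z2 _ => ?_
      ring
    have : ∑ z1, ∑ z2, a z1 * b z2 * (Q1 z1 y - Q2 z2 y)
        = (∑ z1, ∑ z2, a z1 * b z2 * Q1 z1 y) - ∑ z1, ∑ z2, a z1 * b z2 * Q2 z2 y := by
      rw [← Finset.sum_sub_distrib]
      refine Finset.sum_congr rfl fun z1 _ => ?_
      rw [← Finset.sum_sub_distrib]
      refine Finset.sum_congr rfl fun z2 _ => ?_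
      ring
    rw [this, h1, h2, ha1, hb1, mul_one, one_mul]
  calc tv (fun y => ∑ z, a z * Q1 z y) (fun y => ∑ z, b z * Q2 z y)
      = (1/2) * ∑ y, |∑ z1, ∑ z2, a z1 * b z2 * (Q1 z1 y - Q2 z2 y)| := by
        unfold tv
        congr 1
        exact Finset.sum_congr rfl fun y _ => by rw [key y]
    _ ≤ (1/2) * ∑ y, ∑ z1, ∑ z2, a z1 * b z2 * |Q1 z1 y - Q2 z2 y| := by
        gcongr with y _
        calc |∑ z1, ∑ z2, a z1 * b z2 * (Q1 z1 y - Q2 z2 y)|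
            ≤ ∑ z1, |∑ z2, a z1 * b z2 * (Q1 z1 y - Q2 z2 y)| :=
              Finset.abs_sum_le_sum_abs _ _
          _ ≤ ∑ z1, ∑ z2, a z1 * b z2 * |Q1 z1 y - Q2 z2 y| := by
              refine Finset.sum_le_sum fun z1 _ => ?_
              calc |∑ z2, a z1 * b z2 * (Q1 z1 y - Q2 z2 y)|
                  ≤ ∑ z2, |a z1 * b z2 * (Q1 z1 y - Q2 z2 y)| :=
                    Finset.abs_sum_le_sum_abs _ _
                _ = ∑ z2, a z1 * b z2 * |Q1 z1 y - Q2 z2 y| := by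
                    refine Finset.sum_congr rfl fun z2 _ => ?_
                    rw [abs_mul, abs_mul, abs_of_nonneg (ha z1), abs_of_nonneg (hb z2)]
    _ = ∑ z1, ∑ z2, a z1 * b z2 * tv (Q1 z1) (Q2 z2) := by
        have swap : ∑ y, ∑ z1, ∑ z2, a z1 * b z2 * |Q1 z1 y - Q2 z2 y|
            = ∑ z1, ∑ z2, ∑ y, a z1 * b z2 * |Q1 z1 y - Q2 z2 y| := by
          calc ∑ y, ∑ z1, ∑ z2, a z1 * b z2 * |Q1 z1 y - Q2 z2 y|
              = ∑ z1, ∑ y, ∑ z2, a z1 * b z2 * |Q1 z1 y - Q2 z2 y| := Finset.sum_comm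
            _ = ∑ z1, ∑ z2, ∑ y, a z1 * b z2 * |Q1 z1 y - Q2 z2 y| :=
                Finset.sum_congr rfl fun z1 _ => Finset.sum_comm
        rw [swap, Finset.mul_sum]
        refine Finset.sum_congr rfl fun z1 _ => ?_
        rw [Finset.mul_sum]
        refine Finset.sum_congr rfl fun z2 _ => ?_
        unfold tv
        simp only [Finset.mul_sum]
        exact Finset.sum_congr rfl fun y _ => by ring
    _ ≤ ∑ z1, ∑ z2, a z1 * b z2 * D := by
        refine Finset.sum_le_sum fun z1 _ => Finset.sum_le_sum fun z2 _ => ?_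
        exact mul_le_mul_of_nonneg_left (hD z1 z2) (mul_nonneg (ha z1) (hb z2))
    _ = D := by
        calc ∑ z1, ∑ z2, a z1 * b z2 * D
            = ∑ z1, a z1 * ∑ z2, b z2 * D := by
              refine Finset.sum_congr rfl fun z1 _ => ?_
              rw [Finset.mul_sum]
              exact Finset.sum_congr rfl fun z2 _ => by ring
          _ = D := by rw [← Finset.sum_mul, ← Finset.sum_mul, hb1, one_mul, ha1, one_mul]

theorem stmt5 {X Y Z : Type*} [Fintype X] [Fintype Y] [Fintype Z]
    [Nonempty X] [Nonempty Y] [Nonempty Z]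
    (p : X × Y × Z → ℝ) (hp : IsPmf p)
    (hpos : ∀ x z, 0 < ∑ y, p (x, y, z)) :
    diam (fun x => fun y => (∑ z, p (x, y, z)) / ∑ y', ∑ z, p (x, y', z)) ≤
      diam (fun xz : X × Z => fun y => p (xz.1, y, xz.2) / ∑ y', p (xz.1, y', xz.2)) := by
  set Q : X × Z → Y → ℝ := fun xz y => p (xz.1, y, xz.2) / ∑ y', p (xz.1, y', xz.2) with hQ
  set D := diam Q with hDdef
  have hDtv : ∀ i j : X × Z, tv (Q i) (Q j) ≤ D := by
    intro i j
    rw [hDdef]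
    unfold diam
    exact le_trans
      (le_ciSup (f := fun j => tv (Q i) (Q j)) (Set.Finite.bddAbove (Set.finite_range _)) j)
      (le_ciSup (f := fun i => ⨆ j : X × Z, tv (Q i) (Q j))
        (Set.Finite.bddAbove (Set.finite_range _)) i)
  have hD0 : 0 ≤ D := by
    obtain ⟨x⟩ := ‹Nonempty X›; obtain ⟨z⟩ := ‹Nonempty Z›
    have := hDtv (x, z) (x, z)
    have h0 : tv (Q (x, z)) (Q (x, z)) = 0 := by unfold tv; simp
    linarith
  -- positivity facts
  have hT : ∀ x z, 0 < ∑ y, p (x, y, z) := hpos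
  have hS : ∀ x : X, 0 < ∑ y', ∑ z, p (x, y', z) := by
    intro x
    rw [Finset.sum_comm]
    exact Finset.sum_pos (fun z _ => hT x z) Finset.univ_nonempty
  -- weights
  set a : X → Z → ℝ := fun x z => (∑ y, p (x, y, z)) / ∑ y', ∑ z, p (x, y', z) with haDef
  have haNonneg : ∀ x z, 0 ≤ a x z := fun x z => div_nonneg (le_of_lt (hT x z)) (le_of_lt (hS x))
  have haSum : ∀ x, ∑ z, a x z = 1 := by
    intro x
    rw [haDef]
    simp only
    rw [← Finset.sum_div]
    rw [div_eq_one_iff_eq (ne_of_gt (hS x))]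
    exact Finset.sum_comm
  have hrow : ∀ x : X, (fun y => (∑ z, p (x, y, z)) / ∑ y', ∑ z, p (x, y', z))
      = fun y => ∑ z, a x z * Q (x, z) y := by
    intro x
    funext y
    rw [Finset.sum_div]
    refine Finset.sum_congr rfl fun z _ => ?_
    rw [haDef, hQ]
    simp only
    have h1 := ne_of_gt (hT x z)
    have h2 := ne_of_gt (hS x)
    field_simp
  have hbound : ∀ x1 x2 : X,
      tv (fun y => (∑ z, p (x1, y, z)) / ∑ y', ∑ z, p (x1, y', z))
        (fun y => (∑ z, p (x2, y, z)) / ∑ y', ∑ z, p (x2, y', z)) ≤ D := by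
    intro x1 x2
    rw [hrow x1, hrow x2]
    exact tv_mix (a x1) (a x2) (haNonneg x1) (haNonneg x2) (haSum x1) (haSum x2)
      (fun z => Q (x1, z)) (fun z => Q (x2, z)) D hD0 (fun z1 z2 => hDtv (x1, z1) (x2, z2))
  unfold diam
  exact ciSup_le fun x1 => ciSup_le fun x2 => hbound x1 x2
end

section
/- For finite random variables X, Y, Z with joint pmf p, the diameter of the joint CPT of (Y,Z) given X satisfies d⁺(P_{YZ|X}) ≤ min{ d⁺(P_{Y|XZ}) + d⁺(P_{Z|X}), 1 }. -/
open Finset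

lemma tv_le_diam {I X : Type*} [Fintype I] [Fintype X] (P : I → X → ℝ) (i j : I) :
    tv (P i) (P j) ≤ diam P := by
  have h1 : BddAbove (Set.range fun j => tv (P i) (P j)) :=
    Set.Finite.bddAbove (Set.finite_range _)
  have h2 : BddAbove (Set.range fun i => ⨆ j, tv (P i) (P j)) :=
    Set.Finite.bddAbove (Set.finite_range _)
  exact le_trans (le_ciSup h1 j) (le_ciSup h2 i)

lemma diam_le {I X : Type*} [Fintype I] [Fintype X] [Nonempty I] (P : I → X → ℝ) (c : ℝ)
    (h : ∀ i j, tv (P i) (P j) ≤ c) : diam P ≤ c :=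
  ciSup_le fun i => ciSup_le (h i)

lemma tv_le_one {X : Type*} [Fintype X] {p q : X → ℝ} (hp : IsPmf p) (hq : IsPmf q) :
    tv p q ≤ 1 := by
  have : ∑ x, |p x - q x| ≤ ∑ x, (p x + q x) := by
    apply Finset.sum_le_sum
    intro x _
    calc |p x - q x| ≤ |p x| + |q x| := abs_sub _ _
      _ = p x + q x := by rw [abs_of_nonneg (hp.1 x), abs_of_nonneg (hq.1 x)]
  have h2 : ∑ x, (p x + q x) = 2 := by
    rw [Finset.sum_add_distrib, hp.2, hq.2]; norm_num
  unfold tv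
  nlinarith

theorem stmt7 {X Y Z : Type*} [Fintype X] [Fintype Y] [Fintype Z]
    [Nonempty X] [Nonempty Y] [Nonempty Z]
    (p : X × Y × Z → ℝ) (hp : IsPmf p)
    (hpos : ∀ x z, 0 < ∑ y, p (x, y, z)) :
    diam (fun x => fun yz : Y × Z => p (x, yz.1, yz.2) / ∑ y, ∑ z, p (x, y, z)) ≤
      min (diam (fun xz : X × Z => fun y => p (xz.1, y, xz.2) / ∑ y', p (xz.1, y', xz.2)) +
        diam (fun x => fun z => (∑ y, p (x, y, z)) / ∑ y, ∑ z', p (x, y, z'))) 1 := by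
  -- notation
  have ppos : ∀ w, 0 ≤ p w := hp.1
  set S : X → ℝ := fun x => ∑ y, ∑ z, p (x, y, z) with hS
  set N : X → Z → ℝ := fun x z => ∑ y, p (x, y, z) with hN
  have hNpos : ∀ x z, 0 < N x z := hpos
  have hSpos : ∀ x, 0 < S x := by
    intro x
    have : S x = ∑ z, N x z := by
      rw [hS, Finset.sum_comm]
    rw [this]
    exact Finset.sum_pos (fun z _ => hNpos x z) Finset.univ_nonempty
  set q : X → Y × Z → ℝ := fun x yz => p (x, yz.1, yz.2) / S x with hq
  set c : X → Z → Y → ℝ := fun x z y => p (x, y, z) / N x z with hc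
  set r : X → Z → ℝ := fun x z => N x z / S x with hr
  -- q is pmf
  have hqpmf : ∀ x, IsPmf (q x) := by
    intro x
    constructor
    · intro yz; exact div_nonneg (ppos _) (hSpos x).le
    · rw [hq]
      simp only
      rw [← Finset.sum_div, Fintype.sum_prod_type]
      exact div_self (hSpos x).ne'
  -- r properties
  have hrnn : ∀ x z, 0 ≤ r x z := fun x z => div_nonneg (hNpos x z).le (hSpos x).le
  have hrsum : ∀ x, ∑ z, r x z = 1 := by
    intro x
    rw [hr]
    simp only
    rw [← Finset.sum_div]
    have : ∑ z, N x z = S x := by rw [hS, hN, Finset.sum_comm]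
    rw [this]
    exact div_self (hSpos x).ne'
  have hcsum : ∀ x z, ∑ y, c x z y = 1 := by
    intro x z
    rw [hc]
    simp only
    rw [← Finset.sum_div]
    exact div_self (hNpos x z).ne'
  have hcnn : ∀ x z y, 0 ≤ c x z y := fun x z y => div_nonneg (ppos _) (hNpos x z).le
  have hdecomp : ∀ x (yz : Y × Z), q x yz = c x yz.2 yz.1 * r x yz.2 := by
    intro x yz
    rw [hq, hc, hr]
    simp only
    rw [div_mul_div_comm]
    rw [mul_comm (p (x, yz.1, yz.2)) (N x yz.2)] at *
    rw [mul_div_mul_left _ _ (hNpos x yz.2).ne']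
  set A := diam (fun xz : X × Z => fun y => p (xz.1, y, xz.2) / ∑ y', p (xz.1, y', xz.2)) with hA
  set B := diam (fun x => fun z => (∑ y, p (x, y, z)) / ∑ y, ∑ z', p (x, y, z')) with hB
  have hcA : ∀ x1 x2 z, tv (c x1 z) (c x2 z) ≤ A := by
    intro x1 x2 z
    exact tv_le_diam (fun xz : X × Z => fun y => p (xz.1, y, xz.2) / ∑ y', p (xz.1, y', xz.2))
      (x1, z) (x2, z)
  have hrB : ∀ x1 x2, tv (r x1) (r x2) ≤ B := by
    intro x1 x2
    exact tv_le_diam (fun x => fun z => (∑ y, p (x, y, z)) / ∑ y, ∑ z', p (x, y, z')) x1 x2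
  -- key bound
  have key : ∀ x1 x2, tv (q x1) (q x2) ≤ A + B := by
    intro x1 x2
    have step1 : tv (q x1) (q x2) ≤
        (∑ z, r x1 z * tv (c x1 z) (c x2 z)) + tv (r x1) (r x2) := by
      unfold tv
      rw [Fintype.sum_prod_type]
      have hb : ∀ y z, |q x1 (y, z) - q x2 (y, z)| ≤
          |c x1 z y - c x2 z y| * r x1 z + c x2 z y * |r x1 z - r x2 z| := by
        intro y z
        rw [hdecomp x1 (y, z), hdecomp x2 (y, z)]
        simp only
        have : c x1 z y * r x1 z - c x2 z y * r x2 z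
            = (c x1 z y - c x2 z y) * r x1 z + c x2 z y * (r x1 z - r x2 z) := by ring
        rw [this]
        calc |(c x1 z y - c x2 z y) * r x1 z + c x2 z y * (r x1 z - r x2 z)|
            ≤ |(c x1 z y - c x2 z y) * r x1 z| + |c x2 z y * (r x1 z - r x2 z)| := abs_add_le _ _
          _ = |c x1 z y - c x2 z y| * r x1 z + c x2 z y * |r x1 z - r x2 z| := by
              rw [abs_mul, abs_mul, abs_of_nonneg (hrnn x1 z), abs_of_nonneg (hcnn x2 z y)]
      calc (1/2) * ∑ y, ∑ z, |q x1 (y, z) - q x2 (y, z)|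
          ≤ (1/2) * ∑ y, ∑ z, (|c x1 z y - c x2 z y| * r x1 z + c x2 z y * |r x1 z - r x2 z|) := by
            apply mul_le_mul_of_nonneg_left _ (by norm_num)
            exact Finset.sum_le_sum fun y _ => Finset.sum_le_sum fun z _ => hb y z
        _ = (∑ z, r x1 z * ((1/2) * ∑ y, |c x1 z y - c x2 z y|)) +
            (1/2) * ∑ z, |r x1 z - r x2 z| * ∑ y, c x2 z y := by
            rw [Finset.sum_comm]
            simp only [Finset.sum_add_distrib, Finset.mul_sum, Finset.sum_mul, mul_add]
            congr 1
            · apply Finset.sum_congr rfl; intro z _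
              apply Finset.sum_congr rfl; intro y _
              ring
            · apply Finset.sum_congr rfl; intro z _
              apply Finset.sum_congr rfl; intro y _
              ring
        _ = (∑ z, r x1 z * tv (c x1 z) (c x2 z)) + tv (r x1) (r x2) := by
            unfold tv
            congr 1
            congr 1
            apply Finset.sum_congr rfl; intro z _
            rw [hcsum x2 z, mul_one]
    have step2 : (∑ z, r x1 z * tv (c x1 z) (c x2 z)) ≤ A := by
      calc ∑ z, r x1 z * tv (c x1 z) (c x2 z) ≤ ∑ z, r x1 z * A :=
            Finset.sum_le_sum fun z _ =>
              mul_le_mul_of_nonneg_left (hcA x1 x2 z) (hrnn x1 z)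
        _ = A := by rw [← Finset.sum_mul, hrsum, one_mul]
    linarith [step1, step2, hrB x1 x2]
  apply le_min
  · exact diam_le _ _ key
  · exact diam_le _ _ fun i j => tv_le_one (hqpmf i) (hqpmf j)
end

section
/- Contraction of total variation through a channel: if p and p' are two joint pmfs on X × Y that share the same conditional distribution of Y given X (p(y|x) = p'(y|x) for all x, y), then the total variation distance between the Y-marginals satisfies d_V(p(Y), p'(Y)) ≤ d⁺(P_{Y|X}) · d_V(p(X), p'(X)). -/
open Finset

private lemma double_sum_id {X Y : Type*} [Fintype X] (f g : X → ℝ) (W : X → Y → ℝ) (y : Y) :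
    ∑ x, ∑ x', f x * g x' * (W x y - W x' y)
      = (∑ x, f x * W x y) * (∑ x', g x') - (∑ x, f x) * (∑ x', g x' * W x' y) := by
  have hx : ∀ x : X, ∑ x', f x * g x' * (W x y - W x' y)
      = f x * W x y * (∑ x', g x') - f x * (∑ x', g x' * W x' y) := by
    intro x
    rw [Finset.mul_sum, Finset.mul_sum, ← Finset.sum_sub_distrib]
    exact Finset.sum_congr rfl fun x' _ => by ring
  rw [Finset.sum_congr rfl fun x _ => hx x, Finset.sum_sub_distrib, ← Finset.sum_mul,
    ← Finset.sum_mul]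

private lemma key {X Y : Type*} [Fintype X] [Fintype Y]
    (q q' : X → ℝ) (W : X → Y → ℝ) (D : ℝ)
    (hD : ∀ i j, tv (W i) (W j) ≤ D)
    (hq1 : ∑ x, q x = 1) (hq'1 : ∑ x, q' x = 1) :
    tv (fun y => ∑ x, q x * W x y) (fun y => ∑ x, q' x * W x y) ≤ D * tv q q' := by
  classical
  set ap : X → ℝ := fun x => max (q x - q' x) 0 with hap
  set am : X → ℝ := fun x => max (q' x - q x) 0 with ham
  have hsub : ∀ x, ap x - am x = q x - q' x := fun x => by
    simp only [hap, ham]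
    rcases le_total (q x) (q' x) with h | h
    · rw [max_eq_right (by linarith), max_eq_left (by linarith)]; ring
    · rw [max_eq_left (by linarith), max_eq_right (by linarith)]; ring
  have habs : ∀ x, |q x - q' x| = ap x + am x := fun x => by
    simp only [hap, ham]
    rcases le_total (q x) (q' x) with h | h
    · rw [abs_of_nonpos (by linarith), max_eq_right (by linarith),
        max_eq_left (by linarith)]; ring
    · rw [abs_of_nonneg (by linarith), max_eq_left (by linarith),
        max_eq_right (by linarith)]; ring
  have hap_nn : ∀ x, 0 ≤ ap x := fun x => le_max_right _ _
  have ham_nn : ∀ x, 0 ≤ am x := fun x => le_max_right _ _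
  have hsum0 : ∑ x, (q x - q' x) = 0 := by
    rw [Finset.sum_sub_distrib, hq1, hq'1]; ring
  set t : ℝ := ∑ x, ap x with ht
  have ht_nn : 0 ≤ t := Finset.sum_nonneg fun x _ => hap_nn x
  have htm : ∑ x, am x = t := by
    have h1 : ∑ x, (ap x - am x) = 0 := by
      rw [Finset.sum_congr rfl fun x _ => hsub x]; exact hsum0
    rw [Finset.sum_sub_distrib] at h1
    rw [ht]; linarith
  have htv : tv q q' = t := by
    simp only [tv]
    rw [Finset.sum_congr rfl fun x _ => habs x, Finset.sum_add_distrib, htm, ← ht]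
    ring
  have hdiff : ∀ y, (∑ x, q x * W x y) - (∑ x, q' x * W x y)
      = ∑ x, (ap x - am x) * W x y := by
    intro y
    rw [← Finset.sum_sub_distrib]
    exact Finset.sum_congr rfl fun x _ => by rw [hsub x]; ring
  have hkey : ∀ y, t * (∑ x, (ap x - am x) * W x y)
      = ∑ x, ∑ x', ap x * am x' * (W x y - W x' y) := by
    intro y
    rw [double_sum_id ap am W y, htm, ← ht]
    have h2 : ∑ x, (ap x - am x) * W x y
        = (∑ x, ap x * W x y) - (∑ x, am x * W x y) := by
      rw [← Finset.sum_sub_distrib]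
      exact Finset.sum_congr rfl fun x _ => by ring
    rw [h2]; ring
  have hbound : ∀ y, t * |(∑ x, q x * W x y) - (∑ x, q' x * W x y)|
      ≤ ∑ x, ∑ x', ap x * am x' * |W x y - W x' y| := by
    intro y
    rw [hdiff y]
    calc t * |∑ x, (ap x - am x) * W x y|
        = |t * (∑ x, (ap x - am x) * W x y)| := by
          rw [abs_mul, abs_of_nonneg ht_nn]
      _ = |∑ x, ∑ x', ap x * am x' * (W x y - W x' y)| := by rw [hkey y]
      _ ≤ ∑ x, ∑ x', |ap x * am x' * (W x y - W x' y)| := by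
          refine (Finset.abs_sum_le_sum_abs _ _).trans ?_
          exact Finset.sum_le_sum fun x _ => Finset.abs_sum_le_sum_abs _ _
      _ = ∑ x, ∑ x', ap x * am x' * |W x y - W x' y| := by
          refine Finset.sum_congr rfl fun x _ => Finset.sum_congr rfl fun x' _ => ?_
          rw [abs_mul, abs_mul, abs_of_nonneg (hap_nn x), abs_of_nonneg (ham_nn x')]
  have hsumy : ∑ y, ∑ x, ∑ x', ap x * am x' * |W x y - W x' y|
      = ∑ x, ∑ x', ap x * am x' * (2 * tv (W x) (W x')) := by
    rw [Finset.sum_comm]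
    refine Finset.sum_congr rfl fun x _ => ?_
    rw [Finset.sum_comm]
    refine Finset.sum_congr rfl fun x' _ => ?_
    rw [← Finset.mul_sum]
    congr 1
    simp only [tv]; ring
  have hfinal : t * (∑ y, |(∑ x, q x * W x y) - (∑ x, q' x * W x y)|)
      ≤ 2 * D * t * t := by
    calc t * ∑ y, |(∑ x, q x * W x y) - (∑ x, q' x * W x y)|
        = ∑ y, t * |(∑ x, q x * W x y) - (∑ x, q' x * W x y)| := Finset.mul_sum _ _ _
      _ ≤ ∑ y, ∑ x, ∑ x', ap x * am x' * |W x y - W x' y| :=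
          Finset.sum_le_sum fun y _ => hbound y
      _ = ∑ x, ∑ x', ap x * am x' * (2 * tv (W x) (W x')) := hsumy
      _ ≤ ∑ x, ∑ x', ap x * am x' * (2 * D) := by
          refine Finset.sum_le_sum fun x _ => Finset.sum_le_sum fun x' _ => ?_
          have h1 := hD x x'
          have h0 : 0 ≤ ap x * am x' := mul_nonneg (hap_nn x) (ham_nn x')
          nlinarith
      _ = 2 * D * t * t := by
          have hx : ∀ x : X, ∑ x', ap x * am x' * (2 * D)
              = ap x * (t * (2 * D)) := by
            intro x
            rw [← htm]
            rw [show (∑ x', ap x * am x' * (2 * D))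
                = ∑ x', am x' * (ap x * (2 * D)) from
                Finset.sum_congr rfl fun x' _ => by ring]
            rw [← Finset.sum_mul]; ring
          rw [Finset.sum_congr rfl fun x _ => hx x, ← Finset.sum_mul, ← ht]
          ring
  rcases eq_or_lt_of_le ht_nn with h0 | hpos
  · -- t = 0 : both marginals agree
    have hap0 : ∀ x, ap x = 0 := by
      intro x
      have := (Finset.sum_eq_zero_iff_of_nonneg (fun x _ => hap_nn x)).mp
        (by rw [← ht, ← h0]) x (mem_univ x)
      exact this
    have ham0 : ∀ x, am x = 0 := by
      intro x
      have := (Finset.sum_eq_zero_iff_of_nonneg (fun x _ => ham_nn x)).mp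
        (by rw [htm, ← h0]) x (mem_univ x)
      exact this
    have hqq : ∀ x, q x = q' x := fun x => by
      have h1 := hsub x; rw [hap0 x, ham0 x] at h1; linarith
    have hLHS : tv (fun y => ∑ x, q x * W x y) (fun y => ∑ x, q' x * W x y) = 0 := by
      simp only [tv]
      have hy : ∀ y : Y, |(∑ x, q x * W x y) - (∑ x, q' x * W x y)| = 0 := by
        intro y
        rw [abs_eq_zero, sub_eq_zero]
        exact Finset.sum_congr rfl fun x _ => by rw [hqq x]
      rw [Finset.sum_congr rfl fun y _ => hy y]
      simp
    rw [hLHS, htv, ← h0, mul_zero]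
  · have hgoal : tv (fun y => ∑ x, q x * W x y) (fun y => ∑ x, q' x * W x y)
        = (1/2) * ∑ y, |(∑ x, q x * W x y) - (∑ x, q' x * W x y)| := by
      simp only [tv]
    rw [hgoal, htv]
    nlinarith [hfinal]

theorem stmt8 {X Y : Type*} [Fintype X] [Fintype Y] (p p' : X × Y → ℝ)
    (hp : IsPmf p) (hp' : IsPmf p')
    (hpos : ∀ x, 0 < ∑ y, p (x, y)) (hpos' : ∀ x, 0 < ∑ y, p' (x, y))
    (hcond : ∀ x y, p (x, y) / (∑ y', p (x, y')) = p' (x, y) / ∑ y', p' (x, y')) :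
    tv (fun y => ∑ x, p (x, y)) (fun y => ∑ x, p' (x, y)) ≤
      diam (fun x y => p (x, y) / ∑ y', p (x, y')) *
        tv (fun x => ∑ y, p (x, y)) (fun x => ∑ y, p' (x, y)) := by
  classical
  have hq1 : ∑ x, ∑ y, p (x, y) = 1 := by
    rw [← Fintype.sum_prod_type]; exact hp.2
  have hq'1 : ∑ x, ∑ y, p' (x, y) = 1 := by
    rw [← Fintype.sum_prod_type]; exact hp'.2
  set W : X → Y → ℝ := fun x y => p (x, y) / ∑ y', p (x, y') with hW
  have hD : ∀ i j, tv (W i) (W j) ≤ diam W := by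
    intro i j
    have h1 : tv (W i) (W j) ≤ ⨆ j, tv (W i) (W j) :=
      le_ciSup (f := fun j => tv (W i) (W j)) (Set.finite_range _).bddAbove j
    exact h1.trans (le_ciSup (Set.finite_range fun i => ⨆ j, tv (W i) (W j)).bddAbove i)
  have hpW : ∀ x y, p (x, y) = (∑ y', p (x, y')) * W x y := by
    intro x y
    simp only [hW]
    rw [mul_comm, div_mul_cancel₀ _ (hpos x).ne']
  have hp'W : ∀ x y, p' (x, y) = (∑ y', p' (x, y')) * W x y := by
    intro x y
    simp only [hW]
    rw [hcond x y]
    rw [mul_comm, div_mul_cancel₀ _ (hpos' x).ne']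
  have hL : (fun y => ∑ x, p (x, y)) = (fun y => ∑ x, (∑ y', p (x, y')) * W x y) := by
    funext y; exact Finset.sum_congr rfl fun x _ => hpW x y
  have hL' : (fun y => ∑ x, p' (x, y)) = (fun y => ∑ x, (∑ y', p' (x, y')) * W x y) := by
    funext y; exact Finset.sum_congr rfl fun x _ => hp'W x y
  rw [hL, hL']
  exact key (fun x => ∑ y, p (x, y)) (fun x => ∑ y, p' (x, y)) W (diam W) hD hq1 hq'1
end
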